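/- Let 0 → M → ĝ →p g → 0 be an abelian extension of Rota-Baxter pre-Lie algebras of weight λ with section s, and set ψ(a⊗b) := s(a)·̂s(b) - s(a·b), χ(a) := T̂(s(a)) - s(T(a)). Then these maps take values in M, and ψ satisfies the 2-cocycle identity: a·ψ(b⊗c) - ψ(a·b ⊗ c) + ψ(a ⊗ b·c) - ψ(a⊗b)·c = b·ψ(a⊗c) - ψ(b·a ⊗ c) + ψ(b ⊗ a·c) - ψ(b⊗a)·c for all a,b,c ∈ g. -/
import Mathlib


/-- `ψ(a⊗b) := s(a)·̂s(b) - s(a·b)`. -/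
def extPsi {k : Type*} [Field k] [CharZero k]
    {G H : Type*} [AddCommGroup G] [Module k G] [AddCommGroup H] [Module k H]
    (mulG : G →ₗ[k] G →ₗ[k] G) (mulH : H →ₗ[k] H →ₗ[k] H)
    (s : G →ₗ[k] H) (a b : G) : H :=
  mulH (s a) (s b) - s (mulG a b)

/-- `χ(a) := T̂(s(a)) - s(T(a))`. -/
def extChi {k : Type*} [Field k] [CharZero k]
    {G H : Type*} [AddCommGroup G] [Module k G] [AddCommGroup H] [Module k H]
    (T : G →ₗ[k] G) (Th : H →ₗ[k] H) (s : G →ₗ[k] H) (a : G) : H :=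
  Th (s a) - s (T a)

/-- The maps ψ, χ of an abelian extension take values in M and ψ satisfies the
pre-Lie 2-cocycle identity. -/
theorem stmt12 {k : Type*} [Field k] [CharZero k]
    {G H : Type*} [AddCommGroup G] [Module k G] [AddCommGroup H] [Module k H]
    (lam : k)
    (mulG : G →ₗ[k] G →ₗ[k] G) (T : G →ₗ[k] G)
    (mulH : H →ₗ[k] H →ₗ[k] H) (Th : H →ₗ[k] H)
    (M : Submodule k H) (p : H →ₗ[k] G)
    (hpsurj : Function.Surjective p)
    (hker : LinearMap.ker p = M)
    (hpreG : ∀ x y z : G, mulG (mulG x y) z - mulG x (mulG y z)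
      = mulG (mulG y x) z - mulG y (mulG x z))
    (hpreH : ∀ x y z : H, mulH (mulH x y) z - mulH x (mulH y z)
      = mulH (mulH y x) z - mulH y (mulH x z))
    (hRBG : ∀ a b : G, mulG (T a) (T b)
      = T (mulG a (T b) + mulG (T a) b + lam • mulG a b))
    (hRBH : ∀ a b : H, mulH (Th a) (Th b)
      = Th (mulH a (Th b) + mulH (Th a) b + lam • mulH a b))
    (hpmul : ∀ x y : H, p (mulH x y) = mulG (p x) (p y))
    (hpT : ∀ x : H, p (Th x) = T (p x))
    (hMtriv : ∀ u ∈ M, ∀ v ∈ M, mulH u v = 0)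
    (hThM : ∀ m ∈ M, Th m ∈ M)
    (s : G →ₗ[k] H) (hs : ∀ a : G, p (s a) = a) :
    (∀ a b : G, extPsi mulG mulH s a b ∈ M) ∧
    (∀ a : G, extChi T Th s a ∈ M) ∧
    (∀ a b c : G,
      mulH (s a) (extPsi mulG mulH s b c) - extPsi mulG mulH s (mulG a b) c
      + extPsi mulG mulH s a (mulG b c) - mulH (extPsi mulG mulH s a b) (s c)
      = mulH (s b) (extPsi mulG mulH s a c) - extPsi mulG mulH s (mulG b a) c
      + extPsi mulG mulH s b (mulG a c) - mulH (extPsi mulG mulH s b a) (s c)) := by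
  refine ⟨?_, ?_, ?_⟩
  · intro a b
    rw [← hker, LinearMap.mem_ker, extPsi, map_sub, hpmul, hs, hs, hs, sub_self]
  · intro a
    rw [← hker, LinearMap.mem_ker, extChi, map_sub, hpT, hs, hs, sub_self]
  · intro a b c
    have h1 := hpreH (s a) (s b) (s c)
    have h2 : s (mulG (mulG a b) c) - s (mulG a (mulG b c))
        = s (mulG (mulG b a) c) - s (mulG b (mulG a c)) := by
      rw [← map_sub, ← map_sub, hpreG]
    simp only [extPsi, map_sub, LinearMap.sub_apply]
    linear_combination (norm := abel) h2 - h1
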